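/- arXiv:1707.04894 — 5 statements merged into one kernel-verified Lean document; each statement's English description precedes it below -/
import Mathlib

section
/- Weak bisimilarity on stable processes implies observation congruence: if E ≈ E', E is stable, and E' is stable, then E ≈ᶜ E'. -/
inductive Act (L : Type) : Type
  | tau : Act L
  | lab : L → Act L

variable {P L : Type}

def EPS (Tr : P → Act L → P → Prop) : P → P → Prop :=
  Relation.ReflTransGen (fun E E' => Tr E Act.tau E')

def WeakTrans (Tr : P → Act L → P → Prop) (E : P) (u : Act L) (E' : P) : Prop :=
  ∃ E₁ E₂, EPS Tr E E₁ ∧ Tr E₁ u E₂ ∧ EPS Tr E₂ E'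

def WeakBisim (Tr : P → Act L → P → Prop) (W : P → P → Prop) : Prop :=
  ∀ E E', W E E' →
    (∀ l E₁, Tr E (Act.lab l) E₁ → ∃ E₂, WeakTrans Tr E' (Act.lab l) E₂ ∧ W E₁ E₂) ∧
    (∀ l E₂, Tr E' (Act.lab l) E₂ → ∃ E₁, WeakTrans Tr E (Act.lab l) E₁ ∧ W E₁ E₂) ∧
    (∀ E₁, Tr E Act.tau E₁ → ∃ E₂, EPS Tr E' E₂ ∧ W E₁ E₂) ∧
    (∀ E₂, Tr E' Act.tau E₂ → ∃ E₁, EPS Tr E E₁ ∧ W E₁ E₂)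

def WeakEquiv (Tr : P → Act L → P → Prop) (E E' : P) : Prop :=
  ∃ W, W E E' ∧ WeakBisim Tr W

def StrongBisim (Tr : P → Act L → P → Prop) (W : P → P → Prop) : Prop :=
  ∀ E E', W E E' →
    (∀ u E₁, Tr E u E₁ → ∃ E₂, Tr E' u E₂ ∧ W E₁ E₂) ∧
    (∀ u E₂, Tr E' u E₂ → ∃ E₁, Tr E u E₁ ∧ W E₁ E₂)

def StrongEquiv (Tr : P → Act L → P → Prop) (E E' : P) : Prop :=
  ∃ W, W E E' ∧ StrongBisim Tr W

def Stable (Tr : P → Act L → P → Prop) (E : P) : Prop :=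
  ∀ u E', Tr E u E' → u ≠ Act.tau

def ObsCongr (Tr : P → Act L → P → Prop) (E E' : P) : Prop :=
  ∀ u,
    (∀ E₁, Tr E u E₁ → ∃ E₂, WeakTrans Tr E' u E₂ ∧ WeakEquiv Tr E₁ E₂) ∧
    (∀ E₂, Tr E' u E₂ → ∃ E₁, WeakTrans Tr E u E₁ ∧ WeakEquiv Tr E₁ E₂)

theorem WEAK_EQUIV_STABLE_IMP_CONGR (Tr : P → Act L → P → Prop) (E E' : P)
    (h : WeakEquiv Tr E E') (hE : Stable Tr E) (hE' : Stable Tr E') :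
    ObsCongr Tr E E' := by
  obtain ⟨W, hW, hB⟩ := h
  intro u
  obtain ⟨h1, h2, h3, h4⟩ := hB E E' hW
  cases u with
  | tau =>
    constructor
    · intro E₁ ht; exact absurd rfl (hE _ _ ht)
    · intro E₂ ht; exact absurd rfl (hE' _ _ ht)
  | lab l =>
    constructor
    · intro E₁ ht
      obtain ⟨E₂, hwt, hw⟩ := h1 l E₁ ht
      exact ⟨E₂, hwt, W, hw, hB⟩
    · intro E₂ ht
      obtain ⟨E₁, hwt, hw⟩ := h2 l E₂ ht
      exact ⟨E₁, hwt, W, hw, hB⟩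
end

section
/- Deng lemma for weak bisimilarity: if p ≈ q, then either there exists p' with p —τ→ p' and p' ≈ q, or there exists q' with q —τ→ q' and p ≈ q', or p ≈ᶜ q. -/
variable {P L : Type}

theorem DENG_LEMMA (Tr : P → Act L → P → Prop) (p q : P) (h : WeakEquiv Tr p q) :
    (∃ p', Tr p Act.tau p' ∧ WeakEquiv Tr p' q) ∨
    (∃ q', Tr q Act.tau q' ∧ WeakEquiv Tr p q') ∨
    ObsCongr Tr p q := by
  obtain ⟨W, hpq, hW⟩ := h
  by_cases h1 : ∃ p', Tr p Act.tau p' ∧ WeakEquiv Tr p' q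
  · exact Or.inl h1
  by_cases h2 : ∃ q', Tr q Act.tau q' ∧ WeakEquiv Tr p q'
  · exact Or.inr (Or.inl h2)
  refine Or.inr (Or.inr ?_)
  intro u
  obtain ⟨hl, hr, ht, ht'⟩ := hW p q hpq
  constructor
  · intro E₁ hE₁
    cases u with
    | lab l =>
      obtain ⟨E₂, hw, hWr⟩ := hl l E₁ hE₁
      exact ⟨E₂, hw, W, hWr, hW⟩
    | tau =>
      obtain ⟨E₂, heps, hWr⟩ := ht E₁ hE₁
      rcases heps.cases_head with rfl | ⟨c, hc, hrest⟩
      · exact absurd ⟨E₁, hE₁, W, hWr, hW⟩ h1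
      · exact ⟨E₂, ⟨q, c, Relation.ReflTransGen.refl, hc, hrest⟩, W, hWr, hW⟩
  · intro E₂ hE₂
    cases u with
    | lab l =>
      obtain ⟨E₁, hw, hWr⟩ := hr l E₂ hE₂
      exact ⟨E₁, hw, W, hWr, hW⟩
    | tau =>
      obtain ⟨E₁, heps, hWr⟩ := ht' E₂ hE₂
      rcases heps.cases_head with rfl | ⟨c, hc, hrest⟩
      · exact absurd ⟨E₂, hE₂, W, hWr, hW⟩ h2
      · exact ⟨E₁, ⟨p, c, Relation.ReflTransGen.refl, hc, hrest⟩, W, hWr, hW⟩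
end

section
/- Hennessy lemma: for all processes p and q, p ≈ q if and only if (p ≈ᶜ q or p ≈ᶜ τ.q or τ.p ≈ᶜ q). -/
variable {P L : Type}

inductive CCS (L : Type) : Type
  | nil : CCS L
  | pre : Act L → CCS L → CCS L
  | sum : CCS L → CCS L → CCS L

inductive CTrans {L : Type} : CCS L → Act L → CCS L → Prop
  | pre {u : Act L} {E : CCS L} : CTrans (CCS.pre u E) u E
  | sum1 {E E' E₁ : CCS L} {u : Act L} : CTrans E u E₁ → CTrans (CCS.sum E E') u E₁
  | sum2 {E E' E₁ : CCS L} {u : Act L} : CTrans E' u E₁ → CTrans (CCS.sum E E') u E₁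

section Helpers
variable {P L : Type} {Tr : P → Act L → P → Prop} {W : P → P → Prop}

lemma trans_weak {a b : P} {u : Act L} (h : Tr a u b) : WeakTrans Tr a u b :=
  ⟨a, b, Relation.ReflTransGen.refl, h, Relation.ReflTransGen.refl⟩

lemma weak_tau_eps {a b : P} (h : WeakTrans Tr a Act.tau b) : EPS Tr a b := by
  obtain ⟨a₁, a₂, e1, st, e2⟩ := h
  exact e1.trans ((Relation.ReflTransGen.single st).trans e2)

lemma eps_comp_weak {a b c : P} {u : Act L} (h1 : EPS Tr a b) (h2 : WeakTrans Tr b u c) :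
    WeakTrans Tr a u c := by
  obtain ⟨b₁, b₂, e1, st, e2⟩ := h2
  exact ⟨b₁, b₂, h1.trans e1, st, e2⟩

lemma weak_comp_eps {a b c : P} {u : Act L} (h1 : WeakTrans Tr a u b) (h2 : EPS Tr b c) :
    WeakTrans Tr a u c := by
  obtain ⟨b₁, b₂, e1, st, e2⟩ := h1
  exact ⟨b₁, b₂, e1, st, e2.trans h2⟩

lemma bisim_flip (hW : WeakBisim Tr W) : WeakBisim Tr (fun a b => W b a) := by
  intro E E' h
  obtain ⟨c1, c2, c3, c4⟩ := hW E' E h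
  exact ⟨fun l E₁ ht => (c2 l E₁ ht).imp (fun x hx => ⟨hx.1, hx.2⟩),
         fun l E₂ ht => (c1 l E₂ ht).imp (fun x hx => ⟨hx.1, hx.2⟩),
         fun E₁ ht => (c4 E₁ ht).imp (fun x hx => ⟨hx.1, hx.2⟩),
         fun E₂ ht => (c3 E₂ ht).imp (fun x hx => ⟨hx.1, hx.2⟩)⟩

lemma bisim_eps (hW : WeakBisim Tr W) {a a' b : P} (he : EPS Tr a a') (h : W a b) :
    ∃ b', EPS Tr b b' ∧ W a' b' := by
  induction he with
  | refl => exact ⟨b, Relation.ReflTransGen.refl, h⟩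
  | tail _ st ih =>
      obtain ⟨b', e', h'⟩ := ih
      obtain ⟨b'', e'', h''⟩ := (hW _ _ h').2.2.1 _ st
      exact ⟨b'', e'.trans e'', h''⟩

lemma bisim_weak_lab (hW : WeakBisim Tr W) {a a' b : P} {l : L}
    (hw : WeakTrans Tr a (Act.lab l) a') (h : W a b) :
    ∃ b', WeakTrans Tr b (Act.lab l) b' ∧ W a' b' := by
  obtain ⟨a₁, a₂, e1, st, e2⟩ := hw
  obtain ⟨b₁, eb1, h1⟩ := bisim_eps hW e1 h
  obtain ⟨b₂, wb, h2⟩ := (hW _ _ h1).1 _ _ st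
  obtain ⟨b', eb2, h'⟩ := bisim_eps hW e2 h2
  exact ⟨b', weak_comp_eps (eps_comp_weak eb1 wb) eb2, h'⟩

lemma weakEquiv_bisim : WeakBisim Tr (WeakEquiv Tr) := by
  intro E E' hEE'
  obtain ⟨W, h, hW⟩ := hEE'
  obtain ⟨c1, c2, c3, c4⟩ := hW E E' h
  exact ⟨fun l E₁ ht => (c1 l E₁ ht).imp (fun x hx => ⟨hx.1, W, hx.2, hW⟩),
         fun l E₂ ht => (c2 l E₂ ht).imp (fun x hx => ⟨hx.1, W, hx.2, hW⟩),
         fun E₁ ht => (c3 E₁ ht).imp (fun x hx => ⟨hx.1, W, hx.2, hW⟩),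
         fun E₂ ht => (c4 E₂ ht).imp (fun x hx => ⟨hx.1, W, hx.2, hW⟩)⟩

lemma weakEquiv_symm {a b : P} (h : WeakEquiv Tr a b) : WeakEquiv Tr b a := by
  obtain ⟨W, hw, hW⟩ := h
  exact ⟨fun x y => W y x, hw, bisim_flip hW⟩

lemma weakEquiv_refl (a : P) : WeakEquiv Tr a a := by
  refine ⟨Eq, rfl, ?_⟩
  rintro E E' rfl
  exact ⟨fun l E₁ ht => ⟨E₁, trans_weak ht, rfl⟩,
         fun l E₂ ht => ⟨E₂, trans_weak ht, rfl⟩,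
         fun E₁ ht => ⟨E₁, Relation.ReflTransGen.single ht, rfl⟩,
         fun E₂ ht => ⟨E₂, Relation.ReflTransGen.single ht, rfl⟩⟩

lemma weakEquiv_trans {a b c : P} (hab : WeakEquiv Tr a b) (hbc : WeakEquiv Tr b c) :
    WeakEquiv Tr a c := by
  refine ⟨fun x z => ∃ y, WeakEquiv Tr x y ∧ WeakEquiv Tr y z, ⟨b, hab, hbc⟩, ?_⟩
  rintro E E' ⟨F, hEF, hFE'⟩
  refine ⟨?_, ?_, ?_, ?_⟩
  · intro l E₁ ht
    obtain ⟨F₁, wF, h1⟩ := (weakEquiv_bisim E F hEF).1 l E₁ ht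
    obtain ⟨E₂, wE, h2⟩ := bisim_weak_lab weakEquiv_bisim wF hFE'
    exact ⟨E₂, wE, F₁, h1, h2⟩
  · intro l E₂ ht
    obtain ⟨F₁, wF, h1⟩ := (weakEquiv_bisim F E' hFE').2.1 l E₂ ht
    obtain ⟨E₁, wE, h2⟩ := bisim_weak_lab weakEquiv_bisim wF (weakEquiv_symm hEF)
    exact ⟨E₁, wE, F₁, weakEquiv_symm h2, h1⟩
  · intro E₁ ht
    obtain ⟨F₁, eF, h1⟩ := (weakEquiv_bisim E F hEF).2.2.1 E₁ ht
    obtain ⟨E₂, eE, h2⟩ := bisim_eps weakEquiv_bisim eF hFE'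
    exact ⟨E₂, eE, F₁, h1, h2⟩
  · intro E₂ ht
    obtain ⟨F₁, eF, h1⟩ := (weakEquiv_bisim F E' hFE').2.2.2 E₂ ht
    obtain ⟨E₁, eE, h2⟩ := bisim_eps weakEquiv_bisim eF (weakEquiv_symm hEF)
    exact ⟨E₁, eE, F₁, weakEquiv_symm h2, h1⟩

lemma obsCongr_weakEquiv {a b : P} (h : ObsCongr Tr a b) : WeakEquiv Tr a b := by
  refine ⟨fun x y => WeakEquiv Tr x y ∨ (x = a ∧ y = b), Or.inr ⟨rfl, rfl⟩, ?_⟩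
  rintro E E' (hE | ⟨rfl, rfl⟩)
  · obtain ⟨c1, c2, c3, c4⟩ := weakEquiv_bisim E E' hE
    exact ⟨fun l E₁ ht => (c1 l E₁ ht).imp (fun x hx => ⟨hx.1, Or.inl hx.2⟩),
           fun l E₂ ht => (c2 l E₂ ht).imp (fun x hx => ⟨hx.1, Or.inl hx.2⟩),
           fun E₁ ht => (c3 E₁ ht).imp (fun x hx => ⟨hx.1, Or.inl hx.2⟩),
           fun E₂ ht => (c4 E₂ ht).imp (fun x hx => ⟨hx.1, Or.inl hx.2⟩)⟩
  · refine ⟨?_, ?_, ?_, ?_⟩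
    · intro l E₁ ht
      obtain ⟨E₂, w, he⟩ := (h (Act.lab l)).1 E₁ ht
      exact ⟨E₂, w, Or.inl he⟩
    · intro l E₂ ht
      obtain ⟨E₁, w, he⟩ := (h (Act.lab l)).2 E₂ ht
      exact ⟨E₁, w, Or.inl he⟩
    · intro E₁ ht
      obtain ⟨E₂, w, he⟩ := (h Act.tau).1 E₁ ht
      exact ⟨E₂, weak_tau_eps w, Or.inl he⟩
    · intro E₂ ht
      obtain ⟨E₁, w, he⟩ := (h Act.tau).2 E₂ ht
      exact ⟨E₁, weak_tau_eps w, Or.inl he⟩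

end Helpers

section CCSHelpers
variable {L : Type}

lemma tau_pre_equiv (E : CCS L) : WeakEquiv CTrans (CCS.pre Act.tau E) E := by
  refine ⟨fun a b => a = b ∨ a = CCS.pre Act.tau b, Or.inr rfl, ?_⟩
  rintro A B (rfl | rfl)
  · exact ⟨fun l E₁ ht => ⟨E₁, trans_weak ht, Or.inl rfl⟩,
           fun l E₂ ht => ⟨E₂, trans_weak ht, Or.inl rfl⟩,
           fun E₁ ht => ⟨E₁, Relation.ReflTransGen.single ht, Or.inl rfl⟩,
           fun E₂ ht => ⟨E₂, Relation.ReflTransGen.single ht, Or.inl rfl⟩⟩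
  · refine ⟨?_, ?_, ?_, ?_⟩
    · intro l E₁ ht; cases ht
    · intro l E₂ ht
      exact ⟨E₂, ⟨B, E₂, Relation.ReflTransGen.single CTrans.pre, ht,
        Relation.ReflTransGen.refl⟩, Or.inl rfl⟩
    · intro E₁ ht
      cases ht
      exact ⟨B, Relation.ReflTransGen.refl, Or.inl rfl⟩
    · intro E₂ ht
      exact ⟨E₂, (Relation.ReflTransGen.single CTrans.pre).trans
        (Relation.ReflTransGen.single ht), Or.inl rfl⟩

end CCSHelpers
theorem HENNESSY_LEMMA {L : Type} (p q : CCS L) :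
    WeakEquiv CTrans p q ↔
      ObsCongr CTrans p q ∨
      ObsCongr CTrans p (CCS.pre Act.tau q) ∨
      ObsCongr CTrans (CCS.pre Act.tau p) q := by
  constructor
  · intro hpq
    by_cases h1 : ∀ p₁, CTrans p Act.tau p₁ →
        ∃ q₂, WeakTrans CTrans q Act.tau q₂ ∧ WeakEquiv CTrans p₁ q₂
    · by_cases h2 : ∀ q₂, CTrans q Act.tau q₂ →
          ∃ p₁, WeakTrans CTrans p Act.tau p₁ ∧ WeakEquiv CTrans p₁ q₂
      · -- ObsCongr p q
        left
        intro u
        match u with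
        | Act.tau => exact ⟨h1, h2⟩
        | Act.lab l =>
          exact ⟨fun E₁ ht => (weakEquiv_bisim p q hpq).1 l E₁ ht,
                 fun E₂ ht => (weakEquiv_bisim p q hpq).2.1 l E₂ ht⟩
      · -- ∃ q₁, q →τ q₁ with p ≈ q₁ ; ObsCongr (τ.p) q
        right; right
        push_neg at h2
        obtain ⟨q₁, htq, hno⟩ := h2
        obtain ⟨p₁, ep, he⟩ := (weakEquiv_bisim p q hpq).2.2.2 q₁ htq
        have hpq₁ : WeakEquiv CTrans p q₁ := by
          rcases (Relation.ReflTransGen.cases_head ep) with rfl | ⟨c, st, rest⟩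
          · exact he
          · exact absurd he (hno p₁ ⟨p, c, Relation.ReflTransGen.refl, st, rest⟩)
        intro u
        constructor
        · intro E₁ ht
          cases ht
          exact ⟨q₁, trans_weak htq, hpq₁⟩
        · intro E₂ ht
          match u, ht with
          | Act.lab l, ht =>
            obtain ⟨E₁, w, he'⟩ := (weakEquiv_bisim q p (weakEquiv_symm hpq)).1 l E₂ ht
            exact ⟨E₁, eps_comp_weak (Relation.ReflTransGen.single CTrans.pre) w,
              weakEquiv_symm he'⟩
          | Act.tau, ht =>
            obtain ⟨E₁, e, he'⟩ := (weakEquiv_bisim p q hpq).2.2.2 E₂ ht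
            exact ⟨E₁, ⟨CCS.pre Act.tau p, p, Relation.ReflTransGen.refl, CTrans.pre, e⟩, he'⟩
    · -- ∃ p₁, p →τ p₁ with p₁ ≈ q ; ObsCongr p (τ.q)
      right; left
      push_neg at h1
      obtain ⟨p₁, htp, hno⟩ := h1
      obtain ⟨q₁, eq', he⟩ := (weakEquiv_bisim p q hpq).2.2.1 p₁ htp
      have hp₁q : WeakEquiv CTrans p₁ q := by
        rcases (Relation.ReflTransGen.cases_head eq') with rfl | ⟨c, st, rest⟩
        · exact he
        · exact absurd he (hno q₁ ⟨q, c, Relation.ReflTransGen.refl, st, rest⟩)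
      intro u
      constructor
      · intro E₁ ht
        match u, ht with
        | Act.lab l, ht =>
          obtain ⟨E₂, w, he'⟩ := (weakEquiv_bisim p q hpq).1 l E₁ ht
          exact ⟨E₂, eps_comp_weak (Relation.ReflTransGen.single CTrans.pre) w, he'⟩
        | Act.tau, ht =>
          obtain ⟨E₂, e, he'⟩ := (weakEquiv_bisim p q hpq).2.2.1 E₁ ht
          exact ⟨E₂, ⟨CCS.pre Act.tau q, q, Relation.ReflTransGen.refl, CTrans.pre, e⟩, he'⟩
      · intro E₂ ht
        cases ht
        exact ⟨p₁, trans_weak htp, hp₁q⟩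
  · rintro (h | h | h)
    · exact obsCongr_weakEquiv h
    · exact weakEquiv_trans (obsCongr_weakEquiv h) (tau_pre_equiv q)
    · exact weakEquiv_trans (weakEquiv_symm (tau_pre_equiv p)) (obsCongr_weakEquiv h)
end

section
/- Coarsest congruence with free actions: if p and q each have a free action (there exists a visible label a with no weak a-transition from the process), and p + r ≈ q + r for all processes r, then p ≈ᶜ q. -/
variable {P L : Type}

def free_action {L : Type} (p : CCS L) : Prop :=
  ∃ a : L, ∀ p', ¬ WeakTrans CTrans p (Act.lab a) p'

lemma single_weak {Tr : P → Act L → P → Prop} {p E : P} {u : Act L} (h : Tr p u E) :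
    WeakTrans Tr p u E := ⟨p, E, .refl, h, .refl⟩

lemma weak_prepend {Tr : P → Act L → P → Prop} {p p₁ E : P} {u : Act L}
    (h : Tr p Act.tau p₁) (h2 : WeakTrans Tr p₁ u E) : WeakTrans Tr p u E := by
  obtain ⟨F₁, F₂, he, hs, he2⟩ := h2
  exact ⟨F₁, F₂, Relation.ReflTransGen.head h he, hs, he2⟩

lemma eps_sum_pre {L : Type} {q E : CCS L} {c : L}
    (h : EPS CTrans (CCS.sum q (CCS.pre (Act.lab c) CCS.nil)) E) :
    E = CCS.sum q (CCS.pre (Act.lab c) CCS.nil) ∨ WeakTrans CTrans q Act.tau E := by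
  rcases Relation.ReflTransGen.cases_head h with h | ⟨d, hd, hrest⟩
  · exact Or.inl h.symm
  · cases hd with
    | sum1 h1 => exact Or.inr ⟨q, d, .refl, h1, hrest⟩
    | sum2 h2 => cases h2

lemma weak_sum_pre {L : Type} {q E₂ : CCS L} {c l : L}
    (h : WeakTrans CTrans (CCS.sum q (CCS.pre (Act.lab c) CCS.nil)) (Act.lab l) E₂) :
    WeakTrans CTrans q (Act.lab l) E₂ ∨ l = c := by
  obtain ⟨F₁, F₂, he, hs, he2⟩ := h
  rcases Relation.ReflTransGen.cases_head he with heq | ⟨d, hd, hrest⟩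
  · rw [← heq] at hs
    cases hs with
    | sum1 h1 => exact Or.inl ⟨q, F₂, .refl, h1, he2⟩
    | sum2 h2 => cases h2; exact Or.inr rfl
  · cases hd with
    | sum1 h1 => exact Or.inl ⟨F₁, F₂, Relation.ReflTransGen.head h1 hrest, hs, he2⟩
    | sum2 h2 => cases h2

theorem COARSEST_CONGR_RL {L : Type} (p q : CCS L)
    (hp : free_action p) (hq : free_action q)
    (h : ∀ r, WeakEquiv CTrans (CCS.sum p r) (CCS.sum q r)) :
    ObsCongr CTrans p q := by
  obtain ⟨a, ha⟩ := hp
  obtain ⟨b, hb⟩ := hq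
  intro u
  constructor
  · intro p₁ hstep
    obtain ⟨W, hW, hbis⟩ := h (CCS.pre (Act.lab a) CCS.nil)
    cases u with
    | lab l =>
      obtain ⟨E₂, hwt, hW2⟩ := (hbis _ _ hW).1 l p₁ (CTrans.sum1 hstep)
      rcases weak_sum_pre hwt with hwt' | rfl
      · exact ⟨E₂, hwt', W, hW2, hbis⟩
      · exact absurd (single_weak hstep) (ha p₁)
    | tau =>
      obtain ⟨E₂, heps, hW2⟩ := (hbis _ _ hW).2.2.1 p₁ (CTrans.sum1 hstep)
      rcases eps_sum_pre heps with rfl | hwt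
      · obtain ⟨E₁, hw, _⟩ := (hbis _ _ hW2).2.1 a CCS.nil (CTrans.sum2 CTrans.pre)
        exact absurd (weak_prepend hstep hw) (ha E₁)
      · exact ⟨E₂, hwt, W, hW2, hbis⟩
  · intro q₂ hstep
    obtain ⟨W, hW, hbis⟩ := h (CCS.pre (Act.lab b) CCS.nil)
    cases u with
    | lab l =>
      obtain ⟨E₁, hwt, hW2⟩ := (hbis _ _ hW).2.1 l q₂ (CTrans.sum1 hstep)
      rcases weak_sum_pre hwt with hwt' | rfl
      · exact ⟨E₁, hwt', W, hW2, hbis⟩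
      · exact absurd (single_weak hstep) (hb q₂)
    | tau =>
      obtain ⟨E₁, heps, hW2⟩ := (hbis _ _ hW).2.2.2 q₂ (CTrans.sum1 hstep)
      rcases eps_sum_pre heps with rfl | hwt
      · obtain ⟨E₂, hw, _⟩ := (hbis _ _ hW2).1 b CCS.nil (CTrans.sum2 CTrans.pre)
        exact absurd (weak_prepend hstep hw) (hb E₂)
      · exact ⟨E₁, hwt, W, hW2, hbis⟩
end

section
/- The finite Klop processes are pairwise non-bisimilar: for natural numbers m < n and a visible action a, ¬(KLOP a m ∼ KLOP a n), and also ¬(KLOP a m ≈ KLOP a n); consequently the function KLOP a is injective. -/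
variable {P L : Type}

def KLOP {L : Type} (a : L) : ℕ → CCS L
  | 0 => CCS.nil
  | n + 1 => CCS.sum (KLOP a n) (CCS.pre (Act.lab a) (KLOP a n))


lemma klop_trans {L : Type} {a : L} : ∀ {n : ℕ} {u : Act L} {E : CCS L},
    CTrans (KLOP a n) u E → u = Act.lab a ∧ ∃ m, m < n ∧ E = KLOP a m := by
  intro n
  induction n with
  | zero => intro u E h; cases h
  | succ k ih =>
    intro u E h
    cases h with
    | sum1 h =>
      obtain ⟨hu, m, hm, hE⟩ := ih h
      exact ⟨hu, m, Nat.lt_succ_of_lt hm, hE⟩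
    | sum2 h => cases h; exact ⟨rfl, k, Nat.lt_succ_self k, rfl⟩

lemma klop_step {L : Type} {a : L} : ∀ {m n : ℕ}, m < n →
    CTrans (KLOP a n) (Act.lab a) (KLOP a m) := by
  intro m n
  induction n with
  | zero => intro h; omega
  | succ k ih =>
    intro h
    rcases Nat.lt_succ_iff_lt_or_eq.mp h with h' | rfl
    · exact CTrans.sum1 (ih h')
    · exact CTrans.sum2 CTrans.pre

lemma klop_eps {L : Type} {a : L} {n : ℕ} {E : CCS L}
    (h : EPS CTrans (KLOP a n) E) : E = KLOP a n := by
  rcases Relation.ReflTransGen.cases_head h with rfl | ⟨c, hc, _⟩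
  · rfl
  · exact absurd (klop_trans hc).1 (by simp)

lemma klop_not_weak {L : Type} (a : L) : ∀ m : ℕ, ∀ n (W : CCS L → CCS L → Prop),
    WeakBisim CTrans W → m < n → ¬ W (KLOP a m) (KLOP a n) := by
  intro m
  induction m using Nat.strong_induction_on with
  | _ m ih =>
    intro n W hW hmn hw
    obtain ⟨_, h2, _, _⟩ := hW _ _ hw
    obtain ⟨E₁, ⟨A, B, hA, hB, hC⟩, hw'⟩ := h2 a (KLOP a m) (klop_step hmn)
    have hAeq := klop_eps hA
    subst hAeq
    obtain ⟨_, m', hm', rfl⟩ := klop_trans hB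
    have := klop_eps hC
    subst this
    exact ih m' hm' m W hW hm' hw'

lemma strong_to_weak {L : Type} {E E' : CCS L}
    (h : StrongEquiv CTrans E E') : WeakEquiv CTrans E E' := by
  obtain ⟨W, hw, hS⟩ := h
  refine ⟨W, hw, ?_⟩
  intro A B hAB
  obtain ⟨h1, h2⟩ := hS A B hAB
  refine ⟨?_, ?_, ?_, ?_⟩
  · intro l E₁ ht
    obtain ⟨E₂, ht', hw'⟩ := h1 _ _ ht
    exact ⟨E₂, ⟨B, E₂, Relation.ReflTransGen.refl, ht', Relation.ReflTransGen.refl⟩, hw'⟩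
  · intro l E₂ ht
    obtain ⟨E₁, ht', hw'⟩ := h2 _ _ ht
    exact ⟨E₁, ⟨A, E₁, Relation.ReflTransGen.refl, ht', Relation.ReflTransGen.refl⟩, hw'⟩
  · intro E₁ ht
    obtain ⟨E₂, ht', hw'⟩ := h1 _ _ ht
    exact ⟨E₂, Relation.ReflTransGen.single ht', hw'⟩
  · intro E₂ ht
    obtain ⟨E₁, ht', hw'⟩ := h2 _ _ ht
    exact ⟨E₁, Relation.ReflTransGen.single ht', hw'⟩

lemma eq_weak {L : Type} : WeakBisim (CTrans (L := L)) Eq := by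
  intro E E' hEE; subst hEE
  refine ⟨?_, ?_, ?_, ?_⟩
  · exact fun l E₁ h => ⟨E₁, ⟨E, E₁, Relation.ReflTransGen.refl, h, Relation.ReflTransGen.refl⟩, rfl⟩
  · exact fun l E₁ h => ⟨E₁, ⟨E, E₁, Relation.ReflTransGen.refl, h, Relation.ReflTransGen.refl⟩, rfl⟩
  · exact fun E₁ h => ⟨E₁, Relation.ReflTransGen.single h, rfl⟩
  · exact fun E₁ h => ⟨E₁, Relation.ReflTransGen.single h, rfl⟩

theorem KLOP_distinct {L : Type} (a : L) :
    (∀ m n : ℕ, m < n →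
      ¬ StrongEquiv CTrans (KLOP a m) (KLOP a n) ∧
      ¬ WeakEquiv CTrans (KLOP a m) (KLOP a n)) ∧
    Function.Injective (KLOP a) := by
  have key : ∀ m n : ℕ, m < n → ¬ WeakEquiv CTrans (KLOP a m) (KLOP a n) := by
    intro m n hmn ⟨W, hw, hW⟩
    exact klop_not_weak a m n W hW hmn hw
  constructor
  · intro m n hmn
    exact ⟨fun h => key m n hmn (strong_to_weak h), key m n hmn⟩
  · intro m n h
    by_contra hne
    rcases Nat.lt_or_ge m n with hlt | hge
    · exact key m n hlt ⟨Eq, h, eq_weak⟩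
    · have hlt : n < m := lt_of_le_of_ne hge (fun e => hne e.symm)
      exact key n m hlt ⟨Eq, h.symm, eq_weak⟩
end
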